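/- arXiv:2412.04825 — 2 statements merged into one kernel-verified Lean document; each statement's English description precedes it below -/
import Mathlib

section
/- Let n ≥ 3 and 1 ≤ k ≤ n−1, and set k' = min(k, n−k). The dynamical Lie algebra generated on the Hamming-weight-k subspace H_{n,k} by the generator set {Ẽ_{pq} : p, q ∈ {0,…,n−1}, p ≠ q} has real dimension: n if k' = 1; n(n−1)/2 if 1 < k' < n/2; and (n−1)(n−2)/2 if n is even and k = n/2. -/
open Matrix Complex

noncomputable section

/-- Computational basis labels for `n` qubits: bit strings of length `n`. -/
abbrev QState (n : ℕ) := Fin n → Fin 2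

/-- Operators on the `n`-qubit Hilbert space `(ℂ²)^⊗n`, as matrices in the
computational basis. -/
abbrev QOp (n : ℕ) := Matrix (QState n) (QState n) ℂ

/-- Flip the bit at position `m` of a basis label. -/
def flipBit {n : ℕ} (m : Fin n) (b : QState n) : QState n :=
  Function.update b m (1 - b m)

/-- The Pauli `X` operator acting on qubit `m` (identity elsewhere). -/
def pauliX {n : ℕ} (m : Fin n) : QOp n :=
  Matrix.of fun b b' => if b = flipBit m b' then 1 else 0

/-- The Pauli `Y` operator acting on qubit `m` (identity elsewhere):
`Y|0⟩ = i|1⟩`, `Y|1⟩ = -i|0⟩`. -/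
def pauliY {n : ℕ} (m : Fin n) : QOp n :=
  Matrix.of fun b b' =>
    if b = flipBit m b' then (if b' m = 0 then Complex.I else -Complex.I) else 0

/-- The Pauli `Z` operator acting on qubit `m` (identity elsewhere). -/
def pauliZ {n : ℕ} (m : Fin n) : QOp n :=
  Matrix.of fun b b' => if b = b' then (if b m = 0 then 1 else -1) else 0

/-- `R_{pq} = (X_p X_q + Y_p Y_q)/2`. -/
def opR {n : ℕ} (p q : Fin n) : QOp n :=
  (1/2 : ℂ) • (pauliX p * pauliX q + pauliY p * pauliY q)

/-- `J_{pq} = (X_p Y_q − Y_p X_q)/2`. -/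
def opJ {n : ℕ} (p q : Fin n) : QOp n :=
  (1/2 : ℂ) • (pauliX p * pauliY q - pauliY p * pauliX q)

/-- `E_{pq} = (I − Z_p Z_q)/2`. -/
def opE {n : ℕ} (p q : Fin n) : QOp n :=
  (1/2 : ℂ) • ((1 : QOp n) - pauliZ p * pauliZ q)

/-- `S_{pq} = (Z_p − Z_q)/2`. -/
def opS {n : ℕ} (p q : Fin n) : QOp n :=
  (1/2 : ℂ) • (pauliZ p - pauliZ q)

/-- Hamming weight of a basis label. -/
def wt {n : ℕ} (b : QState n) : ℕ := ∑ i, (b i : ℕ)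

/-- Basis labels of the Hamming-weight-`k` subspace `H_{n,k}`. -/
abbrev HWBasis (n k : ℕ) := {b : QState n // wt b = k}

/-- Restriction (compression) of an `n`-qubit operator to the Hamming-weight-`k`
subspace; for Hamming-weight-preserving operators this is the restriction. -/
def restrict {n : ℕ} (k : ℕ) (M : QOp n) : Matrix (HWBasis n k) (HWBasis n k) ℂ :=
  Matrix.of fun x y => M x.1 y.1

attribute [local instance] LieRing.ofAssociativeRing

/-- The dynamical Lie algebra generated by a set `G` of (Hermitian) operators:
the real Lie algebra generated by `{i·H : H ∈ G}` under commutators and real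
linear combinations. -/
def DLA {ι : Type*} [Fintype ι] [DecidableEq ι] (G : Set (Matrix ι ι ℂ)) :
    LieSubalgebra ℝ (Matrix ι ι ℂ) :=
  LieSubalgebra.lieSpan ℝ _ ((fun H => Complex.I • H) '' G)

/-- The real dimension of the dynamical Lie algebra generated by `G`. -/
def dlaDim {ι : Type*} [Fintype ι] [DecidableEq ι] (G : Set (Matrix ι ι ℂ)) : ℕ :=
  Module.finrank ℝ ↥(DLA G)

/-- The cyclic successor `p + 1 (mod n)` of a qubit index. -/
def cyc {n : ℕ} (p : Fin n) : Fin n :=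
  ⟨(p.1 + 1) % n, Nat.mod_lt _ (Nat.lt_of_le_of_lt (Nat.zero_le _) p.2)⟩

/-!
All generators `Ẽ_{pq}` are diagonal, so the DLA is abelian and equals the real span of the
vectors `v_{pq}(b) = [b_p ≠ b_q]` on weight-`k` bit strings `b`. Reading `b` as the `k`-set `S`
of its `1`-bits, `∑ c_{pq} v_{pq}` is the cut function `S ↦ ∑_{p ∈ S, q ∉ S} c_{pq}` of the edge
weight `c` on the complete graph, so the dimension is `C(n, 2)` minus the dimension of the space
of weights all of whose `k`-cuts vanish.

If `min(k, n - k) = 1`, every `b` has a distinguished qubit `p` and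
`δ_b = (v_{pq} + v_{pr} - v_{qr}) / 2`, so the span is everything, of dimension `n`.
If `2 ≤ k ≤ n - 2`, comparing the cuts of `T ∪ {i, a}`, `T ∪ {j, a}`, `T ∪ {i, b}`, `T ∪ {j, b}`
gives the four-point condition `c_{ia} + c_{jb} = c_{ib} + c_{ja}`, hence `c_{pq} = u_p + u_q`.
The `k`-cuts of such a weight are `(n - 2k) ∑_{p ∈ S} u_p + k ∑_p u_p`; they all vanish iff
`u = 0` when `2k ≠ n`, and iff `∑_p u_p = 0` when `2k = n`, which leaves a kernel of
dimension `0`, respectively `n - 1`.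
-/

open Finset

abbrev Edge (α : Type*) := {z : Sym2 α // ¬ z.IsDiag}

section EndpointSum

variable {α : Type*}

def endpointSum : (α → ℝ) →ₗ[ℝ] (Edge α → ℝ) where
  toFun u z := Sym2.lift ⟨fun p q => u p + u q, fun _ _ => add_comm _ _⟩ z.1
  map_add' u v := by
    ext ⟨z, -⟩
    induction z using Sym2.ind
    simp only [Sym2.lift_mk, Pi.add_apply]
    ring
  map_smul' r u := by
    ext ⟨z, -⟩
    induction z using Sym2.ind
    simp only [Sym2.lift_mk, Pi.smul_apply, smul_eq_mul, RingHom.id_apply]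
    ring

lemma extend_endpointSum_apply (u : α → ℝ) {p q : α} (hpq : p ≠ q) :
    Function.extend Subtype.val (endpointSum u) 0 s(p, q) = u p + u q :=
  Subtype.val_injective.extend_apply (endpointSum u) 0 ⟨s(p, q), by simpa using hpq⟩

end EndpointSum

section Cut

variable {α : Type*} [Fintype α] [DecidableEq α]

def cut (w : Sym2 α → ℝ) (S : Finset α) : ℝ :=
  ∑ p ∈ S, ∑ q ∈ Sᶜ, w s(p, q)

lemma cut_insert (w : Sym2 α → ℝ) {T : Finset α} {i : α} (hi : i ∉ T) :
    cut w (insert i T) = cut w T + ∑ q ∈ {i}ᶜ, w s(i, q) - 2 * ∑ t ∈ T, w s(i, t) := by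
  have hrow : ∑ q ∈ {i}ᶜ, w s(i, q) = ∑ q ∈ (insert i T)ᶜ, w s(i, q) + ∑ t ∈ T, w s(i, t) := by
    rw [← sum_union]
    · congr 1; ext q; by_cases hq : q = i <;> simp [hq, hi, em']
    · simp [disjoint_left]
  have hcol (p : α) : ∑ q ∈ Tᶜ, w s(p, q) = ∑ q ∈ (insert i T)ᶜ, w s(p, q) + w s(i, p) := by
    rw [compl_insert, ← add_sum_erase _ _ (mem_compl.mpr hi), add_comm, Sym2.eq_swap]
  simp only [cut, sum_insert hi, hcol, sum_add_distrib, hrow]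
  ring

lemma cut_insert_sub_cut_insert (w : Sym2 α → ℝ) {T : Finset α} {i j : α} (hi : i ∉ T)
    (hj : j ∉ T) :
    cut w (insert i T) - cut w (insert j T) =
      ∑ q ∈ {i}ᶜ, w s(i, q) - ∑ q ∈ {j}ᶜ, w s(j, q) - 2 * ∑ t ∈ T, (w s(i, t) - w s(j, t)) := by
  rw [cut_insert w hi, cut_insert w hj, sum_sub_distrib]
  ring

lemma exists_disjoint_card_eq (A : Finset α) {m : ℕ} (h : m + A.card ≤ Fintype.card α) :
    ∃ T : Finset α, Disjoint A T ∧ T.card = m := by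
  obtain ⟨T, hT, hcard⟩ := exists_subset_card_eq (s := Aᶜ) (n := m) (by rw [card_compl]; omega)
  exact ⟨T, disjoint_of_subset_right hT disjoint_compl_right, hcard⟩

lemma four_point_of_cut_eq_zero {w : Sym2 α → ℝ} {k : ℕ}
    (hcut : ∀ S : Finset α, S.card = k → cut w S = 0) (hk : 2 ≤ k)
    (hkn : k + 2 ≤ Fintype.card α) {i j a b : α} (hia : i ≠ a) (hib : i ≠ b) (hja : j ≠ a)
    (hjb : j ≠ b) :
    w s(i, a) + w s(j, b) = w s(i, b) + w s(j, a) := by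
  have h4 : ({i, j, a, b} : Finset α).card ≤ 4 := card_le_four
  obtain ⟨T, hT, hcard⟩ := exists_disjoint_card_eq {i, j, a, b} (m := k - 2) (by omega)
  have hnotMem {x : α} (hx : x ∈ ({i, j, a, b} : Finset α)) : x ∉ T := disjoint_left.mp hT hx
  have hdiff {x : α} (hix : i ≠ x) (hjx : j ≠ x) (hx : x ∉ T) :
      ∑ q ∈ {i}ᶜ, w s(i, q) - ∑ q ∈ {j}ᶜ, w s(j, q) -
        2 * (w s(i, x) - w s(j, x) + ∑ t ∈ T, (w s(i, t) - w s(j, t))) = 0 := by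
    have hcard' (y : α) (hy : y ∉ T) (hyx : y ≠ x) : (insert y (insert x T)).card = k := by
      rw [card_insert_of_notMem (by simp [hy, hyx]), card_insert_of_notMem hx]; omega
    rw [← sum_insert (f := fun t => w s(i, t) - w s(j, t)) hx,
      ← cut_insert_sub_cut_insert w (by simp [hix, hnotMem]) (by simp [hjx, hnotMem]),
      hcut _ (hcard' i (hnotMem (by simp)) hix), hcut _ (hcard' j (hnotMem (by simp)) hjx),
      sub_self]
  linarith [hdiff hia hja (hnotMem (by simp)), hdiff hib hjb (hnotMem (by simp))]

lemma exists_ne_ne_of_three_le_card (h3 : 3 ≤ Fintype.card α) (p q : α) :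
    ∃ r, r ≠ p ∧ r ≠ q := by
  have h2 : ({p, q} : Finset α).card ≤ 2 := card_le_two
  obtain ⟨r, hr⟩ : ({p, q}ᶜ : Finset α).Nonempty := by
    rw [← card_pos, card_compl]; omega
  exact ⟨r, by simpa [not_or] using hr⟩

lemma exists_add_of_four_point {w : Sym2 α → ℝ} (h3 : 3 ≤ Fintype.card α)
    (hw : ∀ i j a b : α, i ≠ a → i ≠ b → j ≠ a → j ≠ b →
      w s(i, a) + w s(j, b) = w s(i, b) + w s(j, a)) :
    ∃ u : α → ℝ, ∀ p q, p ≠ q → w s(p, q) = u p + u q := by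
  -- `f p a b` is `2 u p` for every choice of distinct `a, b ≠ p`.
  set f : α → α → α → ℝ := fun p a b => w s(p, a) + w s(p, b) - w s(a, b) with hf
  have hf_comm (p a b : α) : f p a b = f p b a := by
    simp only [hf, Sym2.eq_swap (a := a)]; ring
  have hf_swap {p a b b' : α} (hap : a ≠ p) (hbp : b ≠ p) (hb'p : b' ≠ p) (hab : a ≠ b)
      (hab' : a ≠ b') : f p a b = f p a b' := by
    have := hw p a b b' hbp.symm hb'p.symm hab hab'
    simp only [hf]; linarith
  have hf_eq {p a b a' b' : α} (hap : a ≠ p) (hbp : b ≠ p) (ha'p : a' ≠ p) (hb'p : b' ≠ p)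
      (hab : a ≠ b) (ha'b' : a' ≠ b') : f p a b = f p a' b' := by
    by_cases hb'a : b' = a
    · subst hb'a
      rw [hf_swap hap hbp ha'p hab (Ne.symm ha'b'), hf_comm]
    · rw [hf_swap hap hbp hb'p hab (Ne.symm hb'a), hf_comm,
        hf_swap hb'p hap ha'p hb'a (Ne.symm ha'b'), hf_comm]
  choose r hrp hrq using exists_ne_ne_of_three_le_card h3
  refine ⟨fun p => f p (r p p) (r p (r p p)) / 2, fun p q hpq => ?_⟩
  have hp := hf_eq (hrp p p) (hrp p (r p p)) hpq.symm (hrp p q) (hrq p (r p p)).symm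
    (hrq p q).symm
  have hq := hf_eq (hrp q q) (hrp q (r q q)) hpq (hrq p q) (hrq q (r q q)).symm (hrp p q).symm
  simp only [hf, Sym2.eq_swap (a := q) (b := p), Sym2.eq_swap (a := q) (b := r p q)] at hp hq ⊢
  linarith

lemma cut_eq_of_eq_add {w : Sym2 α → ℝ} {u : α → ℝ} (hw : ∀ p q, p ≠ q → w s(p, q) = u p + u q)
    (S : Finset α) :
    cut w S = Sᶜ.card * ∑ p ∈ S, u p + S.card * ∑ q ∈ Sᶜ, u q := by
  calc cut w S = ∑ p ∈ S, ∑ q ∈ Sᶜ, (u p + u q) :=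
        sum_congr rfl fun p hp => sum_congr rfl fun q hq =>
          hw p q (ne_of_mem_of_not_mem hp (mem_compl.mp hq))
    _ = _ := by simp [sum_add_distrib, mul_sum]

lemma eq_of_forall_card_eq_sum_eq {u : α → ℝ} {k : ℕ} (hk : 1 ≤ k)
    (hkn : k < Fintype.card α) {s : ℝ} (hu : ∀ S : Finset α, S.card = k → ∑ p ∈ S, u p = s)
    (i j : α) : u i = u j := by
  have h2 : ({i, j} : Finset α).card ≤ 2 := card_le_two
  obtain ⟨T, hT, hcard⟩ := exists_disjoint_card_eq {i, j} (m := k - 1) (by omega)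
  have hiT : i ∉ T := disjoint_left.mp hT (by simp)
  have hjT : j ∉ T := disjoint_left.mp hT (by simp)
  have hi := hu (insert i T) (by rw [card_insert_of_notMem hiT]; omega)
  have hj := hu (insert j T) (by rw [card_insert_of_notMem hjT]; omega)
  rw [sum_insert hiT] at hi
  rw [sum_insert hjT] at hj
  linarith

lemma cut_eq_mul_sum {w : Sym2 α → ℝ} {u : α → ℝ}
    (hw : ∀ p q, p ≠ q → w s(p, q) = u p + u q) {k : ℕ} (hkn : 2 * k = Fintype.card α)
    (S : Finset α) (hS : S.card = k) :
    cut w S = k * ∑ p, u p := by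
  have hSc : Sᶜ.card = k := by rw [card_compl]; omega
  rw [cut_eq_of_eq_add hw, hS, hSc, ← mul_add, sum_add_sum_compl]

lemma eq_zero_of_cut_eq_zero {w : Sym2 α → ℝ} {u : α → ℝ}
    (hw : ∀ p q, p ≠ q → w s(p, q) = u p + u q) {k : ℕ} (hk : 1 ≤ k)
    (hkn : k < Fintype.card α) (hne : 2 * k ≠ Fintype.card α)
    (hcut : ∀ S : Finset α, S.card = k → cut w S = 0) : u = 0 := by
  set n := Fintype.card α
  have hcut' (S : Finset α) (hS : S.card = k) :
      ((n : ℝ) - 2 * k) * ∑ p ∈ S, u p + k * ∑ p, u p = 0 := by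
    have hSc : (Sᶜ.card : ℝ) = n - k := by
      rw [eq_sub_iff_add_eq, ← hS]; exact_mod_cast card_compl_add_card S
    rw [← hcut S hS, cut_eq_of_eq_add hw, hSc, hS, ← sum_add_sum_compl S u]
    ring
  have hne' : (n : ℝ) - 2 * k ≠ 0 := by
    rw [sub_ne_zero]; exact_mod_cast hne.symm
  have hconst := eq_of_forall_card_eq_sum_eq hk hkn (s := -(k * ∑ p, u p) / (n - 2 * k))
    fun S hS => by rw [eq_div_iff hne']; linarith [hcut' S hS]
  obtain ⟨S, -, hS⟩ :=
    exists_subset_card_eq (s := (univ : Finset α)) (n := k) (by rw [card_univ]; omega)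
  funext i
  have hsum (T : Finset α) : ∑ p ∈ T, u p = T.card * u i := by
    rw [sum_congr rfl fun p _ => hconst p i, sum_const, nsmul_eq_mul]
  have hS' := hcut' S hS
  rw [hsum, hsum univ, hS, card_univ] at hS'
  have hk0 : (k : ℝ) ≠ 0 := by positivity
  have hnk : (n : ℝ) - k ≠ 0 := sub_ne_zero.mpr (by exact_mod_cast hkn.ne')
  have h0 : (2 * k * ((n : ℝ) - k)) * u i = 0 := by linear_combination hS'
  simpa [hk0, hnk] using h0

lemma sum_crossing_eq_cut (c : Edge α → ℝ) (S : Finset α) :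
    ∑ z : Edge α with ¬ (z.1.map (· ∈ S)).IsDiag, c z =
      cut (Function.extend Subtype.val c 0) S := by
  rw [cut, ← sum_product']
  symm
  refine sum_bij (fun x hx => ⟨s(x.1, x.2), ?_⟩) ?_ ?_ ?_ ?_
  · simp only [mem_product, mem_compl] at hx
    simpa using ne_of_mem_of_not_mem hx.1 hx.2
  · intro x hx
    simp only [mem_product, mem_compl] at hx
    simp [hx.1, hx.2]
  · rintro ⟨p, q⟩ hx ⟨p', q'⟩ hx' h
    simp only [mem_product, mem_compl] at hx hx'
    simp only [Subtype.mk.injEq, Sym2.eq_iff] at h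
    aesop
  · rintro ⟨z, hz⟩ hcross
    induction z using Sym2.ind with
    | h p q =>
      simp only [mem_filter, mem_univ, true_and, Sym2.map_mk, Sym2.mk_isDiag_iff] at hcross
      by_cases hp : p ∈ S
      · simp only [hp] at hcross
        exact ⟨(p, q), by simp [hp]; tauto, rfl⟩
      · simp only [hp] at hcross
        exact ⟨(q, p), by simp [hp]; tauto, Subtype.ext Sym2.eq_swap⟩
  · intro x hx
    exact Subtype.val_injective.extend_apply c 0 ⟨s(x.1, x.2), _⟩

lemma endpointSum_injective (h3 : 3 ≤ Fintype.card α) :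
    Function.Injective (endpointSum (α := α)) := by
  rw [← LinearMap.ker_eq_bot, LinearMap.ker_eq_bot']
  intro u hu
  have hsum {p q : α} (hpq : p ≠ q) : u p + u q = 0 := by
    simpa [endpointSum] using congr_fun hu ⟨s(p, q), by simpa using hpq⟩
  funext p
  show u p = 0
  obtain ⟨q, hqp, -⟩ := exists_ne_ne_of_three_le_card h3 p p
  obtain ⟨r, hrp, hrq⟩ := exists_ne_ne_of_three_le_card h3 p q
  linarith [hsum hqp.symm, hsum hrp.symm, hsum hrq.symm]

end Cut

lemma pauliZ_eq_diagonal {n : ℕ} (m : Fin n) :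
    pauliZ m = diagonal fun b => if b m = 0 then 1 else -1 := rfl

lemma opE_eq_diagonal {n : ℕ} (p q : Fin n) :
    opE p q = diagonal fun b => if b p = b q then 0 else 1 := by
  rw [opE, pauliZ_eq_diagonal, pauliZ_eq_diagonal, diagonal_mul_diagonal, ← diagonal_one,
    diagonal_sub, ← diagonal_smul]
  have entry (x y : Fin 2) :
      (1 / 2 : ℂ) * (1 - (if x = 0 then 1 else -1) * (if y = 0 then 1 else -1)) =
        if x = y then 0 else 1 := by
    fin_cases x <;> fin_cases y <;> norm_num
  exact congr_arg diagonal (funext fun b => entry (b p) (b q))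

lemma restrict_diagonal {n : ℕ} (k : ℕ) (d : QState n → ℂ) :
    restrict k (diagonal d) = diagonal fun b : HWBasis n k => d b.1 :=
  submatrix_diagonal d Subtype.val Subtype.val_injective

def crossIndicator {n : ℕ} (k : ℕ) (z : Sym2 (Fin n)) : HWBasis n k → ℝ :=
  fun b => if (z.map b.1).IsDiag then 0 else 1

def iDiagonal (ι : Type*) [DecidableEq ι] : (ι → ℝ) →ₗ[ℝ] Matrix ι ι ℂ where
  toFun v := diagonal fun i => I * v i
  map_add' v w := by simp [mul_add, diagonal_add]
  map_smul' r v := by ext i j; by_cases h : i = j <;> simp [h]; ring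

lemma iDiagonal_injective (ι : Type*) [DecidableEq ι] : Function.Injective (iDiagonal ι) := by
  intro v w h
  funext i
  simpa [iDiagonal, I_ne_zero] using congr_fun (diagonal_injective h) i

lemma I_smul_restrict_opE {n : ℕ} (k : ℕ) (p q : Fin n) :
    I • restrict k (opE p q) = iDiagonal _ (crossIndicator k s(p, q)) := by
  rw [opE_eq_diagonal, restrict_diagonal, ← diagonal_smul]
  congr 1
  funext b
  by_cases h : b.1 p = b.1 q <;> simp [crossIndicator, h]

lemma lie_iDiagonal_eq_zero (ι : Type*) [DecidableEq ι] [Fintype ι] (v w : ι → ℝ) :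
    ⁅iDiagonal ι v, iDiagonal ι w⁆ = 0 := by
  simp [iDiagonal, Ring.lie_def, diagonal_mul_diagonal, mul_comm]

def cutMap (n k : ℕ) : (Edge (Fin n) → ℝ) →ₗ[ℝ] (HWBasis n k → ℝ) :=
  Fintype.linearCombination ℝ fun z => crossIndicator k z.1

lemma dlaDim_opE_eq_finrank_range_cutMap (n k : ℕ) :
    dlaDim {M : Matrix (HWBasis n k) (HWBasis n k) ℂ |
        ∃ p q : Fin n, p ≠ q ∧ M = restrict k (opE p q)} =
      Module.finrank ℝ (LinearMap.range (cutMap n k)) := by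
  have himage : (fun H => I • H) '' {M : Matrix (HWBasis n k) (HWBasis n k) ℂ |
        ∃ p q : Fin n, p ≠ q ∧ M = restrict k (opE p q)} =
      iDiagonal _ '' Set.range fun z : Edge (Fin n) => crossIndicator k z.1 := by
    ext M
    constructor
    · rintro ⟨_, ⟨p, q, hpq, rfl⟩, rfl⟩
      exact ⟨_, ⟨⟨s(p, q), by simpa using hpq⟩, rfl⟩, (I_smul_restrict_opE k p q).symm⟩
    · rintro ⟨_, ⟨⟨z, hz⟩, rfl⟩, rfl⟩
      induction z using Sym2.ind with
      | h p q => exact ⟨_, ⟨p, q, by simpa using hz, rfl⟩, I_smul_restrict_opE k p q⟩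
  have hspan : (DLA {M : Matrix (HWBasis n k) (HWBasis n k) ℂ |
        ∃ p q : Fin n, p ≠ q ∧ M = restrict k (opE p q)}).toSubmodule =
      (LinearMap.range (cutMap n k)).map (iDiagonal _) := by
    rw [DLA, himage, LieSubalgebra.coe_lieSpan_eq_span_of_forall_lie_eq_zero,
      Submodule.span_image, cutMap, Fintype.range_linearCombination]
    rintro _ ⟨v, -, rfl⟩ _ ⟨w, -, rfl⟩
    exact lie_iDiagonal_eq_zero _ v w
  change Module.finrank ℝ (DLA _).toSubmodule = _
  rw [hspan]
  exact (Submodule.equivMapOfInjective _ (iDiagonal_injective _) _).finrank_eq.symm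

lemma fin_two_eq_iff (x y t : Fin 2) : x = y ↔ (x = t ↔ y = t) := by
  revert x y t; decide

def ones {n : ℕ} (b : QState n) : Finset (Fin n) := {i | b i = 1}

lemma wt_eq_card_ones {n : ℕ} (b : QState n) : wt b = (ones b).card := by
  rw [wt, ones, card_filter]
  refine sum_congr rfl fun i _ => ?_
  generalize b i = x
  fin_cases x <;> rfl

lemma ones_indicator {n : ℕ} (S : Finset (Fin n)) :
    ones (fun i => if i ∈ S then 1 else 0) = S := by
  ext i
  by_cases h : i ∈ S <;> simp [ones, h]

def hwBasisEquiv (n k : ℕ) : HWBasis n k ≃ {S : Finset (Fin n) // S.card = k} where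
  toFun b := ⟨ones b.1, by rw [← wt_eq_card_ones, b.2]⟩
  invFun S := ⟨fun i => if i ∈ S.1 then 1 else 0, by rw [wt_eq_card_ones, ones_indicator, S.2]⟩
  left_inv b := by
    ext i
    by_cases h : b.1 i = 1 <;> simp [ones, h, (fin_two_eq_iff _ 0 1).mpr]
  right_inv S := Subtype.ext (ones_indicator S.1)

lemma card_hwBasis (n k : ℕ) : Fintype.card (HWBasis n k) = n.choose k := by
  rw [Fintype.card_congr (hwBasisEquiv n k), Fintype.card_finset_len, Fintype.card_fin]

lemma crossIndicator_eq_ite_ones {n k : ℕ} (z : Sym2 (Fin n)) (b : HWBasis n k) :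
    crossIndicator k z b = if (z.map (· ∈ ones b.1)).IsDiag then 0 else 1 := by
  induction z using Sym2.ind with
  | h p q =>
    simp only [crossIndicator, ones, Sym2.map_mk, Sym2.mk_isDiag_iff, mem_filter, mem_univ,
      true_and, eq_iff_iff]
    exact if_congr (fin_two_eq_iff _ _ 1) rfl rfl

lemma cutMap_apply {n k : ℕ} (c : Edge (Fin n) → ℝ) (b : HWBasis n k) :
    cutMap n k c b = cut (Function.extend Subtype.val c 0) (ones b.1) := by
  rw [← sum_crossing_eq_cut, cutMap, Fintype.linearCombination_apply, Finset.sum_apply,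
    sum_filter]
  refine sum_congr rfl fun z _ => ?_
  rw [Pi.smul_apply, crossIndicator_eq_ite_ones]
  split_ifs <;> simp

lemma mem_ker_cutMap_iff {n k : ℕ} (c : Edge (Fin n) → ℝ) :
    c ∈ LinearMap.ker (cutMap n k) ↔
      ∀ S : Finset (Fin n), S.card = k → cut (Function.extend Subtype.val c 0) S = 0 := by
  rw [LinearMap.mem_ker, funext_iff, (hwBasisEquiv n k).forall_congr_left, Subtype.forall]
  simp [cutMap_apply, hwBasisEquiv, ones_indicator]

lemma ker_cutMap_le_range_endpointSum {n k : ℕ} (hk : 2 ≤ k) (hkn : k + 2 ≤ n) :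
    LinearMap.ker (cutMap n k) ≤ LinearMap.range endpointSum := by
  intro c hc
  rw [mem_ker_cutMap_iff] at hc
  obtain ⟨u, hu⟩ := exists_add_of_four_point (by simp; omega) fun _ _ _ _ =>
    four_point_of_cut_eq_zero hc hk (by simpa using hkn)
  refine ⟨u, funext fun ⟨z, hz⟩ => ?_⟩
  induction z using Sym2.ind with
  | h p q =>
    have hpq : p ≠ q := by simpa using hz
    rw [← Subtype.val_injective.extend_apply c 0 ⟨s(p, q), hz⟩, hu p q hpq]
    rfl

lemma finrank_range_cutMap_add_finrank_ker_comp {n k : ℕ} (hk : 2 ≤ k) (hkn : k + 2 ≤ n) :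
    Module.finrank ℝ (LinearMap.range (cutMap n k)) +
        Module.finrank ℝ (LinearMap.ker (cutMap n k ∘ₗ endpointSum)) = n.choose 2 := by
  have h3 : 3 ≤ Fintype.card (Fin n) := by simp; omega
  rw [LinearMap.ker_comp,
    (Submodule.equivMapOfInjective _ (endpointSum_injective h3) _).finrank_eq,
    Submodule.map_comap_eq_self (ker_cutMap_le_range_endpointSum hk hkn),
    LinearMap.finrank_range_add_finrank_ker, Module.finrank_fintype_fun_eq_card,
    Sym2.card_subtype_not_diag, Fintype.card_fin]

lemma ker_cutMap_comp_endpointSum_eq_bot {n k : ℕ} (hk : 1 ≤ k) (hkn : k < n)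
    (hne : 2 * k ≠ n) :
    LinearMap.ker (cutMap n k ∘ₗ endpointSum) = ⊥ := by
  rw [LinearMap.ker_eq_bot']
  intro u hu
  exact eq_zero_of_cut_eq_zero (fun p q => extend_endpointSum_apply u) hk (by simpa using hkn)
    (by simpa using hne) ((mem_ker_cutMap_iff _).mp hu)

lemma finrank_ker_cutMap_comp_endpointSum_of_two_mul_eq {n k : ℕ} (hk : 1 ≤ k)
    (hkn : 2 * k = n) :
    Module.finrank ℝ (LinearMap.ker (cutMap n k ∘ₗ endpointSum)) = n - 1 := by
  have hker : LinearMap.ker (cutMap n k ∘ₗ endpointSum) =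
      LinearMap.ker (Fintype.linearCombination ℝ fun _ : Fin n => (1 : ℝ)) := by
    ext u
    rw [LinearMap.mem_ker, LinearMap.comp_apply, ← LinearMap.mem_ker, mem_ker_cutMap_iff,
      LinearMap.mem_ker, Fintype.linearCombination_apply]
    simp only [smul_eq_mul, mul_one]
    have hcut := cut_eq_mul_sum (fun p q => extend_endpointSum_apply u (p := p) (q := q))
      (by simpa using hkn)
    obtain ⟨S, -, hS⟩ :=
      exists_subset_card_eq (s := (univ : Finset (Fin n))) (n := k) (by simp; omega)
    have hk0 : (k : ℝ) ≠ 0 := by positivity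
    constructor
    · intro h
      simpa [hcut S hS, hk0] using h S hS
    · intro h S hS
      rw [hcut S hS, h, mul_zero]
  have hsum : Fintype.linearCombination ℝ (fun _ : Fin n => (1 : ℝ)) ≠ 0 := by
    intro h
    simpa using LinearMap.congr_fun h (Pi.single (⟨0, by omega⟩ : Fin n) 1)
  have := Module.Dual.finrank_ker_add_one_of_ne_zero hsum
  rw [hker]
  simp only [Module.finrank_fintype_fun_eq_card, Fintype.card_fin] at this
  omega

lemma crossIndicator_mem_range_cutMap {n : ℕ} (k : ℕ) {p q : Fin n} (hpq : p ≠ q) :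
    crossIndicator k s(p, q) ∈ LinearMap.range (cutMap n k) :=
  ⟨Pi.single ⟨s(p, q), by simpa using hpq⟩ 1, by simp [cutMap]⟩

lemma crossIndicator_eq_of_forall_iff {n k : ℕ} {t : Fin 2} {b : HWBasis n k} {j : Fin n}
    (hj : ∀ i, b.1 i = t ↔ i = j) {p q : Fin n} (hpq : p ≠ q) :
    crossIndicator k s(p, q) b = (if p = j then 1 else 0) + (if q = j then 1 else 0) := by
  have hiff : b.1 p = b.1 q ↔ (p = j ↔ q = j) := by rw [fin_two_eq_iff _ _ t, hj, hj]
  simp only [crossIndicator, Sym2.map_mk, Sym2.mk_isDiag_iff, hiff]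
  by_cases hp : p = j <;> by_cases hq : q = j <;> simp_all

lemma range_cutMap_eq_top {n k : ℕ} (hn : 3 ≤ n) (t : Fin 2)
    (huniq : ∀ b : HWBasis n k, ∃! i, b.1 i = t) : LinearMap.range (cutMap n k) = ⊤ := by
  choose j hj hj_uniq using huniq
  have hjt (b : HWBasis n k) (i : Fin n) : b.1 i = t ↔ i = j b :=
    ⟨hj_uniq b i, fun h => h ▸ hj b⟩
  have hj_inj : Function.Injective j := fun b b' h => Subtype.ext <| funext fun i => by
    rw [fin_two_eq_iff _ _ t, hjt, hjt, h]
  have h3 : 3 ≤ Fintype.card (Fin n) := by simpa using hn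
  rw [eq_top_iff, ← (Pi.basisFun ℝ _).span_eq, Submodule.span_le]
  rintro _ ⟨x, rfl⟩
  obtain ⟨q, hq, -⟩ := exists_ne_ne_of_three_le_card h3 (j x) (j x)
  obtain ⟨r, hr, hrq⟩ := exists_ne_ne_of_three_le_card h3 (j x) q
  have hsingle : Pi.basisFun ℝ _ x = (1 / 2 : ℝ) •
      (crossIndicator k s(j x, q) + crossIndicator k s(j x, r) - crossIndicator k s(q, r)) := by
    funext b
    have hcross {p q : Fin n} (hpq : p ≠ q) := crossIndicator_eq_of_forall_iff (hjt b) (k := k) hpq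
    simp only [Pi.basisFun_apply, Pi.smul_apply, Pi.add_apply, Pi.sub_apply, smul_eq_mul,
      hcross hq.symm, hcross hr.symm, hcross hrq.symm, Pi.single_apply, ← hj_inj.eq_iff]
    by_cases hb : j b = j x
    · simp only [hb, if_true]; ring
    · simp only [hb, Ne.symm hb, if_false]; ring
  rw [SetLike.mem_coe, hsingle]
  exact Submodule.smul_mem _ _ (Submodule.sub_mem _ (Submodule.add_mem _
    (crossIndicator_mem_range_cutMap k hq.symm) (crossIndicator_mem_range_cutMap k hr.symm))
    (crossIndicator_mem_range_cutMap k hrq.symm))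

lemma existsUnique_apply_eq_one {n : ℕ} (b : HWBasis n 1) : ∃! i, b.1 i = 1 := by
  rw [Fintype.existsUnique_iff_card_one, ← ones, ← wt_eq_card_ones, b.2]

lemma existsUnique_apply_eq_zero {n : ℕ} (hn : 1 ≤ n) (b : HWBasis n (n - 1)) :
    ∃! i, b.1 i = 0 := by
  have hzero : ({i | b.1 i = 0} : Finset (Fin n)) = (ones b.1)ᶜ := by
    ext i
    simp [ones, fin_two_eq_iff (b.1 i) 0 1]
  rw [Fintype.existsUnique_iff_card_one, hzero, card_compl, ← wt_eq_card_ones, b.2,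
    Fintype.card_fin]
  omega

theorem dla_E_dim_general (n k : ℕ) (hn : 3 ≤ n) :
    (min k (n - k) = 1 →
      dlaDim {M : Matrix (HWBasis n k) (HWBasis n k) ℂ |
          ∃ p q : Fin n, p ≠ q ∧ M = restrict k (opE p q)} = n) ∧
    (1 < min k (n - k) → 2 * k ≠ n →
      dlaDim {M : Matrix (HWBasis n k) (HWBasis n k) ℂ |
          ∃ p q : Fin n, p ≠ q ∧ M = restrict k (opE p q)} = n * (n - 1) / 2) ∧
    (2 * k = n →
      dlaDim {M : Matrix (HWBasis n k) (HWBasis n k) ℂ |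
          ∃ p q : Fin n, p ≠ q ∧ M = restrict k (opE p q)} = (n - 1) * (n - 2) / 2) := by
  simp only [dlaDim_opE_eq_finrank_range_cutMap]
  refine ⟨fun hmin => ?_, fun hmin hne => ?_, fun hhalf => ?_⟩
  · rcases (by omega : k = 1 ∨ k = n - 1) with rfl | rfl
    · rw [range_cutMap_eq_top hn 1 existsUnique_apply_eq_one, finrank_top,
        Module.finrank_fintype_fun_eq_card, card_hwBasis, Nat.choose_one_right]
    · rw [range_cutMap_eq_top hn 0 (existsUnique_apply_eq_zero (by omega)), finrank_top,
        Module.finrank_fintype_fun_eq_card, card_hwBasis, Nat.choose_symm (by omega),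
        Nat.choose_one_right]
  · have hrank := finrank_range_cutMap_add_finrank_ker_comp (n := n) (k := k) (by omega)
      (by omega)
    rwa [ker_cutMap_comp_endpointSum_eq_bot (by omega) (by omega) hne, finrank_bot, add_zero,
      Nat.choose_two_right] at hrank
  · have hrank := finrank_range_cutMap_add_finrank_ker_comp (n := n) (k := k) (by omega)
      (by omega)
    rw [finrank_ker_cutMap_comp_endpointSum_of_two_mul_eq (by omega) hhalf] at hrank
    obtain ⟨m, rfl⟩ : ∃ m, n = m + 1 := ⟨n - 1, by omega⟩
    have hpascal : (m + 1).choose 2 = m + m.choose 2 := by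
      rw [Nat.choose_succ_succ', Nat.choose_one_right]
    rw [hpascal, Nat.add_sub_cancel] at hrank
    rw [Nat.add_sub_cancel, show m + 1 - 2 = m - 1 by omega, ← Nat.choose_two_right]
    omega

/-- The DLA generated by all `Ẽ_{pq}` (type IV): dimension `n` if `min(k,n−k)=1`,
`n(n−1)/2` if `1 < min(k,n−k) < n/2`, and `(n−1)(n−2)/2` if `k = n/2`. -/
theorem dla_E_dim (n k : ℕ) (hn : 3 ≤ n) (hk1 : 1 ≤ k) (hk2 : k ≤ n - 1) :
    (min k (n - k) = 1 →
      dlaDim {M : Matrix (HWBasis n k) (HWBasis n k) ℂ |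
          ∃ p q : Fin n, p ≠ q ∧ M = restrict k (opE p q)} = n) ∧
    (1 < min k (n - k) → 2 * k ≠ n →
      dlaDim {M : Matrix (HWBasis n k) (HWBasis n k) ℂ |
          ∃ p q : Fin n, p ≠ q ∧ M = restrict k (opE p q)} = n * (n - 1) / 2) ∧
    (2 * k = n →
      dlaDim {M : Matrix (HWBasis n k) (HWBasis n k) ℂ |
          ∃ p q : Fin n, p ≠ q ∧ M = restrict k (opE p q)} = (n - 1) * (n - 2) / 2) :=
  dla_E_dim_general n k hn
end
end

section
/- In the n-qubit Hilbert space (ℂ²)^{⊗n}, for any pairwise distinct qubit indices i, j, k, the commutator identity [R_{ij} · Z_k, R_{jk}] = i · J_{ik} holds, where [A, B] = AB − BA. -/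
open Matrix Complex

attribute [local instance 100] LieRing.ofAssociativeRing

noncomputable section

/-! Pauli operators send basis states to multiples of basis states, so every operator here is a
monomial matrix: a bit-flip map on labels together with a weight per label. Products compose the
flips and multiply the weights. Both sides of the identity flip qubits `i` and `k`, and comparing
their weights reduces to the eight values of the bits `i, j, k`. -/

namespace Matrix

variable {ι R : Type*} [DecidableEq ι]

/-- The matrix sending the basis vector `e b` to `c b • e (g b)`. -/
def monomial [Zero R] (g : ι → ι) (c : ι → R) : Matrix ι ι R :=
  of fun b b' => if b = g b' then c b' else 0

theorem monomial_mul [Fintype ι] [NonUnitalNonAssocSemiring R] (g g' : ι → ι) (c c' : ι → R) :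
    monomial g c * monomial g' c' = monomial (g ∘ g') (fun b => c (g' b) * c' b) := by
  ext b b'
  simp only [monomial, mul_apply, of_apply, Function.comp_apply]
  rw [Finset.sum_eq_single (g' b')]
  · simp
  · intro x _ hx
    simp [hx]
  · simp

theorem smul_monomial [MulZeroClass R] (a : R) (g : ι → ι) (c : ι → R) :
    a • monomial g c = monomial g (fun b => a * c b) := by
  ext b b'
  simp only [monomial, smul_apply, of_apply, smul_eq_mul, mul_ite, mul_zero]

theorem monomial_add [AddZeroClass R] (g : ι → ι) (c c' : ι → R) :
    monomial g c + monomial g c' = monomial g (fun b => c b + c' b) := by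
  ext b b'
  simp only [monomial, add_apply, of_apply]
  split_ifs <;> simp

theorem monomial_sub [SubtractionMonoid R] (g : ι → ι) (c c' : ι → R) :
    monomial g c - monomial g c' = monomial g (fun b => c b - c' b) := by
  ext b b'
  simp only [monomial, sub_apply, of_apply]
  split_ifs <;> simp

end Matrix

theorem Fin.eq_zero_or_eq_one_of_two (x : Fin 2) : x = 0 ∨ x = 1 := by
  fin_cases x <;> simp

section Qubits

variable {n : ℕ}

@[simp]
theorem flipBit_apply_self (m : Fin n) (b : QState n) : flipBit m b m = 1 - b m :=
  Function.update_self _ _ _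

@[simp]
theorem flipBit_apply_of_ne {m m' : Fin n} (h : m' ≠ m) (b : QState n) :
    flipBit m b m' = b m' :=
  Function.update_of_ne h _ _

theorem flipBit_involutive (m : Fin n) : Function.Involutive (flipBit m) := by
  intro b
  funext p
  by_cases hp : p = m
  · subst hp
    simp
  · simp [hp]

theorem flipBit_flipBit_comm {m m' : Fin n} (h : m ≠ m') (b : QState n) :
    flipBit m (flipBit m' b) = flipBit m' (flipBit m b) := by
  funext p
  by_cases hp : p = m
  · subst hp
    simp [h]
  · by_cases hp' : p = m'
    · subst hp'
      simp [hp]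
    · simp [hp, hp']

theorem pauliX_eq_monomial (m : Fin n) : pauliX m = monomial (flipBit m) (fun _ => 1) := rfl

theorem pauliY_eq_monomial (m : Fin n) :
    pauliY m = monomial (flipBit m) (fun b => if b m = 0 then I else -I) := rfl

theorem pauliZ_eq_monomial (m : Fin n) :
    pauliZ m = monomial id (fun b => if b m = 0 then 1 else -1) := by
  ext b b'
  by_cases h : b = b'
  · subst h
    simp [pauliZ, monomial]
  · simp [pauliZ, monomial, h]

theorem opR_eq_monomial {p q : Fin n} (hpq : p ≠ q) :
    opR p q = monomial (flipBit p ∘ flipBit q) (fun b => if b p = b q then 0 else 1) := by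
  simp only [opR, pauliX_eq_monomial, pauliY_eq_monomial, monomial_mul, monomial_add,
    smul_monomial]
  congr 1
  funext b
  rw [flipBit_apply_of_ne hpq]
  obtain hp | hp := (b p).eq_zero_or_eq_one_of_two <;>
  obtain hq | hq := (b q).eq_zero_or_eq_one_of_two <;>
  norm_num [hp, hq, ← sq]

theorem opJ_eq_monomial {p q : Fin n} (hpq : p ≠ q) :
    opJ p q = monomial (flipBit p ∘ flipBit q)
      (fun b => if b p = b q then 0 else if b q = 0 then I else -I) := by
  simp only [opJ, pauliX_eq_monomial, pauliY_eq_monomial, monomial_mul, monomial_sub,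
    smul_monomial]
  congr 1
  funext b
  rw [flipBit_apply_of_ne hpq]
  obtain hp | hp := (b p).eq_zero_or_eq_one_of_two <;>
  obtain hq | hq := (b q).eq_zero_or_eq_one_of_two <;>
  norm_num [hp, hq] <;> ring

end Qubits

/-- `[R_{ij}·Z_k, R_{jk}] = i·J_{ik}` for pairwise distinct qubits. -/
theorem comm_RZ_R {n : ℕ} (i j k : Fin n) (hij : i ≠ j) (hjk : j ≠ k) (hik : i ≠ k) :
    ⁅opR i j * pauliZ k, opR j k⁆ = Complex.I • opJ i k := by
  have perm₁ : flipBit i ∘ flipBit j ∘ flipBit j ∘ flipBit k = flipBit i ∘ flipBit k := by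
    rw [← Function.comp_assoc (flipBit j), (flipBit_involutive j).comp_self, Function.id_comp]
  have perm₂ : flipBit j ∘ flipBit k ∘ flipBit i ∘ flipBit j = flipBit i ∘ flipBit k := by
    funext b
    simp only [Function.comp_apply, flipBit_flipBit_comm hik.symm, flipBit_flipBit_comm hjk.symm,
      flipBit_flipBit_comm hij.symm, flipBit_involutive j _]
  rw [Ring.lie_def, opR_eq_monomial hij, opR_eq_monomial hjk, pauliZ_eq_monomial,
    opJ_eq_monomial hik, monomial_mul, monomial_mul, monomial_mul]
  simp only [Function.comp_id, Function.comp_assoc]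
  rw [perm₁, perm₂, monomial_sub, smul_monomial]
  congr 1
  funext b
  simp only [Function.comp_apply, id, flipBit_apply_self, flipBit_apply_of_ne hij,
    flipBit_apply_of_ne hij.symm, flipBit_apply_of_ne hjk, flipBit_apply_of_ne hjk.symm,
    flipBit_apply_of_ne hik, flipBit_apply_of_ne hik.symm]
  obtain hi | hi := (b i).eq_zero_or_eq_one_of_two <;>
  obtain hj | hj := (b j).eq_zero_or_eq_one_of_two <;>
  obtain hk | hk := (b k).eq_zero_or_eq_one_of_two <;>
  norm_num [hi, hj, hk]

end
end
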